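/- arXiv:2502.08196 — 16 statements merged into one kernel-verified Lean document; each statement's English description precedes it below -/
import Mathlib

section
/- A ring R is NJ-symmetric if and only if for all a, b, c in R, abc nilpotent implies acb lies in the Jacobson radical of R. -/
/-- A ring `R` is NJ-symmetric if for all `a b c`, `a*b*c` nilpotent implies
`b*a*c` lies in the Jacobson radical. -/
def NJSymmetric (R : Type*) [Ring R] : Prop :=
  ∀ a b c : R, IsNilpotent (a * b * c) → b * a * c ∈ (⊥ : Ideal R).jacobson

theorem IsNilpotent.mul_comm {M : Type*} [MonoidWithZero M] {x y : M}
    (h : IsNilpotent (x * y)) : IsNilpotent (y * x) := by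
  obtain ⟨n, hn⟩ := h
  -- `(y * x) ^ (n + 1) = y * (x * y) ^ n * x`
  exact ⟨n + 1, by rw [pow_succ', mul_assoc, ← mul_pow_mul, hn, zero_mul, mul_zero]⟩

theorem IsNilpotent.mul_rotate {M : Type*} [MonoidWithZero M] {a b c : M}
    (h : IsNilpotent (a * b * c)) : IsNilpotent (c * a * b) := by
  simpa only [mul_assoc] using h.mul_comm

theorem stmt_0 (R : Type*) [Ring R] :
    NJSymmetric R ↔
      ∀ a b c : R, IsNilpotent (a * b * c) → a * c * b ∈ (⊥ : Ideal R).jacobson :=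
  ⟨fun h a b c habc => h c a b habc.mul_rotate,
    fun h a b c habc => h b c a habc.mul_rotate.mul_rotate⟩
end

section
/- A ring R is NJ-symmetric if and only if for all a, b, c in R, abc nilpotent implies cba lies in the Jacobson radical of R. -/
theorem isNilpotent_mul_comm {M : Type*} [MonoidWithZero M] {x y : M} :
    IsNilpotent (x * y) ↔ IsNilpotent (y * x) := by
  suffices ∀ x y : M, IsNilpotent (x * y) → IsNilpotent (y * x) from ⟨this x y, this y x⟩
  rintro x y ⟨n, hn⟩
  refine ⟨n + 1, ?_⟩
  rw [pow_succ, ← mul_assoc, mul_pow_mul, hn, mul_zero, zero_mul]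

theorem isNilpotent_mul_mul_rotate {M : Type*} [MonoidWithZero M] {a b c : M} :
    IsNilpotent (a * b * c) ↔ IsNilpotent (b * c * a) := by
  rw [mul_assoc, isNilpotent_mul_comm]

theorem stmt_1 (R : Type*) [Ring R] :
    NJSymmetric R ↔
      ∀ a b c : R, IsNilpotent (a * b * c) → c * b * a ∈ (⊥ : Ideal R).jacobson := by
  constructor
  · intro H a b c h
    exact H b c a (isNilpotent_mul_mul_rotate.mp h)
  · intro H a b c h
    exact H c a b (isNilpotent_mul_mul_rotate.mp (isNilpotent_mul_mul_rotate.mp h))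
end

section
/- Every left quasi-duo ring is NJ-symmetric. -/
/-!
In a left quasi-duo ring each maximal left ideal `M` is two-sided, and then completely prime:
if `x ∉ M` then `r x + m = 1` for some `m ∈ M`, so `y = r (x y) + m y ∈ M` whenever `x y ∈ M`.
A completely prime two-sided ideal contains every nilpotent, and membership of a product of three
factors only depends on whether one of the factors lies in it.
-/

namespace Ideal

theorem IsMaximal.isPrime_of_isTwoSided {R : Type*} [Ring R] {M : Ideal R} [M.IsTwoSided]
    (hM : M.IsMaximal) : M.IsPrime := by
  refine ⟨hM.ne_top, fun {x y} hxy => or_iff_not_imp_left.2 fun hx => ?_⟩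
  obtain ⟨r, m, hm, hrm⟩ := hM.exists_inv hx
  have hy : y = r * (x * y) + m * y := by
    rw [← mul_assoc, ← add_mul, hrm, one_mul]
  rw [hy]
  exact M.add_mem (M.mul_mem_left r hxy) (M.mul_mem_right y hm)

theorem IsPrime.mul_mem_swap {R : Type*} [Semiring R] {P : Ideal R} [P.IsTwoSided]
    (hP : P.IsPrime) {a b c : R} (h : a * b * c ∈ P) : b * a * c ∈ P := by
  simp only [hP.mul_mem_iff_mem_or_mem] at h ⊢
  tauto

end Ideal

theorem stmt_2 (R : Type*) [Ring R]
    (hqd : ∀ M : Ideal R, M.IsMaximal → ∀ r : R, ∀ m ∈ M, m * r ∈ M) :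
    NJSymmetric R := by
  rintro a b c ⟨n, hn⟩
  refine Ideal.mem_sInf.2 fun M ⟨_, hM⟩ => ?_
  have : M.IsTwoSided := ⟨fun r hm => hqd M hM r _ hm⟩
  have hP : M.IsPrime := hM.isPrime_of_isTwoSided
  exact hP.mul_mem_swap (hP.mem_of_pow_mem n (hn ▸ M.zero_mem))
end

section
/- Every abelian J-clean ring is NJ-symmetric. -/
namespace Ideal

variable {R : Type*} [Ring R] (I : Ideal R) [I.IsTwoSided]

theorem mem_of_isNilpotent_of_eq_add {x e j : R} (hx : IsNilpotent x) (he : IsIdempotentElem e)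
    (hj : j ∈ I) (hxej : x = e + j) : x ∈ I := by
  have hmk : Quotient.mk I x = Quotient.mk I e := by
    rw [hxej, map_add, Quotient.eq_zero_iff_mem.mpr hj, add_zero]
  have hidem : IsIdempotentElem (Quotient.mk I x) := hmk ▸ he.map _
  exact Quotient.eq_zero_iff_mem.mp (hidem.eq_zero_of_isNilpotent (hx.map _))

theorem Quotient.mul_comm_of_forall_eq_add
    (habelian : ∀ e : R, IsIdempotentElem e → ∀ r : R, e * r = r * e)
    (hclean : ∀ a : R, ∃ e j : R, IsIdempotentElem e ∧ j ∈ I ∧ a = e + j)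
    (x y : R ⧸ I) : x * y = y * x := by
  have hidem (z : R ⧸ I) : ∃ e : R, IsIdempotentElem e ∧ Quotient.mk I e = z := by
    obtain ⟨a, rfl⟩ := Quotient.mk_surjective z
    obtain ⟨e, j, he, hj, rfl⟩ := hclean a
    exact ⟨e, he, by rw [map_add, Quotient.eq_zero_iff_mem.mpr hj, add_zero]⟩
  obtain ⟨e, he, rfl⟩ := hidem x
  obtain ⟨f, -, rfl⟩ := hidem y
  rw [← map_mul, ← map_mul, habelian e he f]

end Ideal

theorem stmt_3 (R : Type*) [Ring R]
    (habelian : ∀ e : R, IsIdempotentElem e → ∀ r : R, e * r = r * e)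
    (hJclean : ∀ a : R, ∃ e j : R, IsIdempotentElem e ∧ j ∈ (⊥ : Ideal R).jacobson ∧
      a = e + j) :
    NJSymmetric R := by
  intro a b c hnil
  obtain ⟨e, j, he, hj, habc⟩ := hJclean (a * b * c)
  have habcJ := (⊥ : Ideal R).jacobson.mem_of_isNilpotent_of_eq_add hnil he hj habc
  rw [← Ideal.Quotient.eq_zero_iff_mem] at habcJ ⊢
  have hcomm := Ideal.Quotient.mul_comm_of_forall_eq_add _ habelian hJclean
  simpa only [map_mul, hcomm (Ideal.Quotient.mk _ b)] using habcJ
end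

section
/- If R is a GWS ring in which every nilpotent element x satisfies x^2 = 0, then R is NJ-symmetric. -/
theorem mem_jacobson_bot_of_forall_isNilpotent_mul_left {R : Type*} [Ring R] {x : R}
    (h : ∀ y, IsNilpotent (y * x)) : x ∈ (⊥ : Ideal R).jacobson := by
  refine Ideal.mem_jacobson_iff.mpr fun y => ?_
  obtain ⟨z, hz⟩ := (h y).isUnit_add_one.exists_left_inv
  exact ⟨z, by rw [Ideal.mem_bot, mul_assoc, ← mul_add_one, hz, sub_self]⟩

def IsGWS (R : Type*) [Ring R] : Prop :=
  ∀ a b c : R, a * b * c = 0 → IsNilpotent (b * a * c)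

namespace IsGWS

variable {R : Type*} [Ring R]

theorem isNilpotent_mul_right (hR : IsGWS R) (hsq : ∀ x : R, IsNilpotent x → x ^ 2 = 0)
    {x : R} (hx : IsNilpotent x) (y : R) : IsNilpotent (x * y) := by
  have hyxxy : y * x * (x * y) = 0 := by
    rw [mul_assoc, ← mul_assoc x, ← sq, hsq x hx, zero_mul, mul_zero]
  exact IsNilpotent.of_pow (m := 2) (by rw [sq]; exact hR y x (x * y) hyxxy)

theorem isNilpotent_mul_left (hR : IsGWS R) (hsq : ∀ x : R, IsNilpotent x → x ^ 2 = 0)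
    {x : R} (hx : IsNilpotent x) (y : R) : IsNilpotent (y * x) :=
  (hR.isNilpotent_mul_right hsq hx y).mul_comm

theorem isNilpotent_mul_mul (hR : IsGWS R) (hsq : ∀ x : R, IsNilpotent x → x ^ 2 = 0)
    {x y : R} (hxy : IsNilpotent (x * y)) (r : R) : IsNilpotent (x * r * y) := by
  have hsquare : (x * r * y) ^ 2 = x * r * (y * x) * (r * y) := by noncomm_ring
  have hyx : IsNilpotent (x * r * (y * x) * (r * y)) :=
    hR.isNilpotent_mul_right hsq (hR.isNilpotent_mul_left hsq hxy.mul_comm _) _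
  exact IsNilpotent.of_pow (m := 2) (by rw [hsquare]; exact hyx)

theorem isNilpotent_mul_mul_swap (hR : IsGWS R) (hsq : ∀ x : R, IsNilpotent x → x ^ 2 = 0)
    {a b c : R} (habc : IsNilpotent (a * b * c)) : IsNilpotent (b * a * c) := by
  have hacbc : IsNilpotent (a * c * b * c) := by
    simpa only [mul_assoc] using hR.isNilpotent_mul_mul hsq (x := a) (y := b * c)
      (by rwa [← mul_assoc]) c
  have hacbac : IsNilpotent (a * c * b * a * c) := hR.isNilpotent_mul_mul hsq hacbc a
  have hsquare : (b * a * c) ^ 2 = b * (a * c * b * a * c) := by noncomm_ring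
  exact IsNilpotent.of_pow (m := 2) (by rw [hsquare]; exact hR.isNilpotent_mul_left hsq hacbac b)

end IsGWS

theorem stmt_4 (R : Type*) [Ring R]
    (hGWS : ∀ a b c : R, a * b * c = 0 → IsNilpotent (b * a * c))
    (hidx : ∀ x : R, IsNilpotent x → x ^ 2 = 0) :
    NJSymmetric R := by
  intro a b c habc
  have hbac : IsNilpotent (b * a * c) := IsGWS.isNilpotent_mul_mul_swap hGWS hidx habc
  exact mem_jacobson_bot_of_forall_isNilpotent_mul_left (IsGWS.isNilpotent_mul_left hGWS hidx hbac)
end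

section
/- For any ring R and any integer n ≥ 2, the matrix ring M_n(R) is not NJ-symmetric. Specifically, with a = e_{11} + e_{21}, b = e_{22}, c = e_{12} + e_{22}, one has abc = 0 but bac = e_{22} is not in J(M_n(R)). -/
theorem not_njSymmetric_of_mul_mul_eq_zero {S : Type*} [Ring S] {a b c : S}
    (habc : a * b * c = 0) (hbac : b * a * c ∉ (⊥ : Ideal S).jacobson) : ¬ NJSymmetric S :=
  fun h ↦ hbac (h a b c (habc ▸ IsNilpotent.zero))

-- With `y = -1`, membership in the Jacobson radical makes `1 - e` left invertible,
-- and a left inverse of `1 - e` kills `e`.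
theorem IsIdempotentElem.eq_zero_of_mem_jacobson_bot {S : Type*} [Ring S] {e : S}
    (he : IsIdempotentElem e) (h : e ∈ (⊥ : Ideal S).jacobson) : e = 0 := by
  obtain ⟨z, hz⟩ := Ideal.mem_jacobson_iff.1 h (-1)
  rw [Ideal.mem_bot, sub_eq_zero] at hz
  calc e = (z * -1 * e + z) * e := by rw [hz, one_mul]
    _ = z * (e - e * e) := by noncomm_ring
    _ = 0 := by rw [he.eq, sub_self, mul_zero]

namespace Matrix

variable {ι α : Type*} [DecidableEq ι] [Fintype ι]

theorem isIdempotentElem_single_one [Semiring α] (i : ι) :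
    IsIdempotentElem (single i i (1 : α)) := by
  rw [IsIdempotentElem, single_mul_single_same, mul_one]

theorem single_one_notMem_jacobson_bot [Ring α] [Nontrivial α] (i : ι) :
    single i i (1 : α) ∉ (⊥ : Ideal (Matrix ι ι α)).jacobson := fun h ↦ by
  have hzero := (isIdempotentElem_single_one i).eq_zero_of_mem_jacobson_bot h
  simpa using congrArg (fun M : Matrix ι ι α ↦ M i i) hzero

variable [Semiring α] {i j : ι}

theorem single_add_single_mul_single_mul_single_add_single_eq_zero (hij : i ≠ j) :
    (single i i (1 : α) + single j i 1) * single j j 1 * (single i j 1 + single j j 1) = 0 := by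
  simp [add_mul, mul_add, hij]

theorem single_mul_single_add_single_mul_single_add_single_eq_single (hij : i ≠ j) :
    single j j (1 : α) * (single i i 1 + single j i 1) * (single i j 1 + single j j 1) =
      single j j 1 := by
  simp [mul_add, hij, hij.symm]

end Matrix

open Matrix in
theorem stmt_5 (R : Type*) [Ring R] [Nontrivial R] (n : ℕ) (hn : 2 ≤ n) :
    ¬ NJSymmetric (Matrix (Fin n) (Fin n) R) ∧
    (Matrix.single (⟨0, by omega⟩ : Fin n) (⟨0, by omega⟩ : Fin n) (1 : R) +
        Matrix.single (⟨1, by omega⟩ : Fin n) (⟨0, by omega⟩ : Fin n) (1 : R)) *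
      Matrix.single (⟨1, by omega⟩ : Fin n) (⟨1, by omega⟩ : Fin n) (1 : R) *
      (Matrix.single (⟨0, by omega⟩ : Fin n) (⟨1, by omega⟩ : Fin n) (1 : R) +
        Matrix.single (⟨1, by omega⟩ : Fin n) (⟨1, by omega⟩ : Fin n) (1 : R)) = 0 ∧
    Matrix.single (⟨1, by omega⟩ : Fin n) (⟨1, by omega⟩ : Fin n) (1 : R) *
      (Matrix.single (⟨0, by omega⟩ : Fin n) (⟨0, by omega⟩ : Fin n) (1 : R) +
        Matrix.single (⟨1, by omega⟩ : Fin n) (⟨0, by omega⟩ : Fin n) (1 : R)) *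
      (Matrix.single (⟨0, by omega⟩ : Fin n) (⟨1, by omega⟩ : Fin n) (1 : R) +
        Matrix.single (⟨1, by omega⟩ : Fin n) (⟨1, by omega⟩ : Fin n) (1 : R)) =
      Matrix.single (⟨1, by omega⟩ : Fin n) (⟨1, by omega⟩ : Fin n) (1 : R) ∧
    Matrix.single (⟨1, by omega⟩ : Fin n) (⟨1, by omega⟩ : Fin n) (1 : R) ∉
      (⊥ : Ideal (Matrix (Fin n) (Fin n) R)).jacobson := by
  have hne : (⟨0, by omega⟩ : Fin n) ≠ ⟨1, by omega⟩ := by simp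
  have habc := single_add_single_mul_single_mul_single_add_single_eq_zero (α := R) hne
  have hbac := single_mul_single_add_single_mul_single_add_single_eq_single (α := R) hne
  have hJ := single_one_notMem_jacobson_bot (α := R) (⟨1, by omega⟩ : Fin n)
  exact ⟨not_njSymmetric_of_mul_mul_eq_zero habc (by rwa [hbac]), habc, hbac, hJ⟩
end

section
/- Let R be an NJ-symmetric ring and M a maximal left ideal of R which equals the left annihilator of some nonzero idempotent e. Then M is a two-sided ideal of R. -/
theorem NJSymmetric.mul_mul_mem_jacobson_of_mul_eq_zero {R : Type*} [Ring R] (hR : NJSymmetric R)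
    {m e : R} (h : m * e = 0) (r : R) : m * r * e ∈ (⊥ : Ideal R).jacobson :=
  hR r m e <| by rw [mul_assoc, h, mul_zero]; exact IsNilpotent.zero

theorem Ideal.jacobson_bot_le_of_isMaximal {R : Type*} [Ring R] {M : Ideal R} (hM : M.IsMaximal) :
    (⊥ : Ideal R).jacobson ≤ M :=
  (jacobson_eq_self_of_isMaximal (H := hM)).le.trans' (jacobson_mono bot_le)

theorem stmt_6_general (R : Type*) [Ring R] (hR : NJSymmetric R)
    (M : Ideal R) (hM : M.IsMaximal) (e : R) (he : IsIdempotentElem e)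
    (hMl : ∀ r : R, r ∈ M ↔ r * e = 0) :
    ∀ r : R, ∀ m ∈ M, m * r ∈ M := by
  intro r m hm
  have hJ : m * r * e ∈ M := Ideal.jacobson_bot_le_of_isMaximal hM <|
    hR.mul_mul_mem_jacobson_of_mul_eq_zero ((hMl m).mp hm) r
  rw [hMl, mul_assoc, he.eq] at hJ
  exact (hMl _).mpr hJ

theorem stmt_6 (R : Type*) [Ring R] (hR : NJSymmetric R)
    (M : Ideal R) (hM : M.IsMaximal) (e : R) (he : IsIdempotentElem e) (he0 : e ≠ 0)
    (hMl : ∀ r : R, r ∈ M ↔ r * e = 0) :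
    ∀ r : R, ∀ m ∈ M, m * r ∈ M :=
  stmt_6_general R hR M hM e he hMl
end

section
/- Every weak symmetric ring is NJ-symmetric. -/
def WeakSymmetric (R : Type*) [Ring R] : Prop :=
  ∀ a b c : R, IsNilpotent (a * b * c) → IsNilpotent (a * c * b)

theorem mul_pow_succ_eq_mul_pow_mul {M : Type*} [Monoid M] (a b : M) (n : ℕ) :
    (a * b) ^ (n + 1) = a * (b * a) ^ n * b := by
  induction n with
  | zero => simp
  | succ n ih => rw [pow_succ, ih, pow_succ]; simp only [mul_assoc]

theorem isNilpotent_mul_comm_s7 {R : Type*} [MonoidWithZero R] {a b : R} :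
    IsNilpotent (a * b) ↔ IsNilpotent (b * a) := by
  have key : ∀ a b : R, IsNilpotent (a * b) → IsNilpotent (b * a) := by
    rintro a b ⟨n, hn⟩
    exact ⟨n + 1, by rw [mul_pow_succ_eq_mul_pow_mul, hn, mul_zero, zero_mul]⟩
  exact ⟨key a b, key b a⟩

namespace WeakSymmetric

variable {R : Type*} [Ring R] (hR : WeakSymmetric R)
include hR

theorem isNilpotent_mul_swap {p x y q : R} (h : IsNilpotent (p * (y * (x * q)))) :
    IsNilpotent (p * (x * (y * q))) := by
  have hrot : IsNilpotent (q * p * y * x) := by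
    simpa only [mul_assoc] using (isNilpotent_mul_comm_s7 (a := p * y * x) (b := q)).1
      (by simpa only [mul_assoc] using h)
  simpa only [mul_assoc] using (isNilpotent_mul_comm_s7 (a := q) (b := p * x * y)).1
    (by simpa only [mul_assoc] using hR (q * p) y x hrot)

theorem isNilpotent_mul_prod_of_perm {l l' : List R} (hl : l.Perm l') (p : R)
    (h : IsNilpotent (p * l.prod)) : IsNilpotent (p * l'.prod) := by
  induction hl generalizing p with
  | nil => exact h
  | cons x _ ih =>
    simpa only [List.prod_cons, mul_assoc] using
      ih (p * x) (by simpa only [List.prod_cons, mul_assoc] using h)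
  | swap x y l =>
    simpa only [List.prod_cons] using
      hR.isNilpotent_mul_swap (by simpa only [List.prod_cons] using h)
  | trans _ _ ih₁ ih₂ => exact ih₂ p (ih₁ p h)

theorem isNilpotent_mul_left {x : R} (hx : IsNilpotent x) (r : R) : IsNilpotent (r * x) := by
  obtain ⟨n, hn⟩ := hx
  have hperm : ∀ m : ℕ,
      (List.replicate m r ++ List.replicate m x).Perm (List.replicate m [r, x]).flatten := by
    intro m
    induction m with
    | zero => rfl
    | succ m ih =>
      simp only [List.replicate_succ, List.cons_append, List.flatten_cons]
      exact (List.perm_middle.trans (List.Perm.cons x ih)).cons r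
  have hprod : IsNilpotent (1 * (List.replicate n r ++ List.replicate n x).prod) := by
    simp [hn]
  have := hR.isNilpotent_mul_prod_of_perm (hperm n) 1 hprod
  simp only [one_mul, List.prod_flatten, List.map_replicate, List.prod_cons, List.prod_nil,
    mul_one, List.prod_replicate] at this
  exact this.of_pow

theorem mem_jacobson_bot_of_isNilpotent {x : R} (hx : IsNilpotent x) :
    x ∈ (⊥ : Ideal R).jacobson := by
  rw [Ideal.mem_jacobson_iff]
  intro y
  obtain ⟨u, hu⟩ := (hR.isNilpotent_mul_left hx y).isUnit_one_add
  refine ⟨↑u⁻¹, ?_⟩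
  have hinv : (↑u⁻¹ : R) * (1 + y * x) = 1 := by rw [← hu, Units.inv_mul]
  rw [Ideal.mem_bot, ← hinv]
  noncomm_ring

end WeakSymmetric

theorem stmt_7 (R : Type*) [Ring R]
    (hws : ∀ a b c : R, IsNilpotent (a * b * c) → IsNilpotent (a * c * b)) :
    NJSymmetric R := by
  intro a b c habc
  have hbca : IsNilpotent (b * c * a) := by
    simpa only [mul_assoc] using
      (isNilpotent_mul_comm_s7 (a := a) (b := b * c)).1 (by simpa only [mul_assoc] using habc)
  exact WeakSymmetric.mem_jacobson_bot_of_isNilpotent hws (hws b c a hbca)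
end

section
/- Every semicommutative ring is NJ-symmetric. -/
/-!
In a semicommutative ring `u * x ^ n = 0` implies `u * (r * x) ^ n = 0`, so nilpotency passes from
`x` to `r * x`, and from `x * y` to `x * r * y` since `(x * r * y) ^ 2 = x * r * (y * x) * r * y`.
Inserting `c` and then `a` into `a * b * c` makes `a * c * b * a * c` nilpotent, and `b` times it
is `(b * a * c) ^ 2`. Hence every `r * (b * a * c)` is nilpotent, so every `1 + r * (b * a * c)`
is a unit, i.e. `b * a * c` lies in the Jacobson radical.
-/

def IsSemicommutative (R : Type*) [Mul R] [Zero R] : Prop :=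
  ∀ a b : R, a * b = 0 → ∀ r : R, a * r * b = 0

theorem Ideal.mem_jacobson_bot_of_forall_isNilpotent_mul {R : Type*} [Ring R] {x : R}
    (h : ∀ r, IsNilpotent (r * x)) : x ∈ (⊥ : Ideal R).jacobson := by
  refine Ideal.mem_jacobson_iff.mpr fun y => ?_
  obtain ⟨u, hu⟩ := (h y).isUnit_one_add
  refine ⟨↑u⁻¹, ?_⟩
  rw [Ideal.mem_bot, mul_assoc, ← mul_add_one, add_comm, ← hu, Units.inv_mul, sub_self]

namespace IsSemicommutative

variable {M : Type*} [MonoidWithZero M] (hM : IsSemicommutative M)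
include hM

theorem mul_mul_pow_eq_zero {u x : M} (r : M) {n : ℕ} (h : u * x ^ n = 0) :
    u * (r * x) ^ n = 0 := by
  induction n generalizing u with
  | zero => simpa using h
  | succ n ih =>
    have hux : u * r * x * x ^ n = 0 := by
      rw [mul_assoc _ x, ← pow_succ']
      exact hM u _ h r
    rw [pow_succ', ← mul_assoc, ← mul_assoc]
    exact ih hux

theorem isNilpotent_mul_left {x : M} (hx : IsNilpotent x) (r : M) : IsNilpotent (r * x) := by
  obtain ⟨n, hn⟩ := hx
  exact ⟨n, by simpa using hM.mul_mul_pow_eq_zero r (u := 1) (by simpa using hn)⟩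

theorem isNilpotent_mul_right {x : M} (hx : IsNilpotent x) (r : M) : IsNilpotent (x * r) :=
  (hM.isNilpotent_mul_left hx r).mul_comm

theorem isNilpotent_mul_mul {x y : M} (h : IsNilpotent (x * y)) (r : M) :
    IsNilpotent (x * r * y) := by
  have hsq : IsNilpotent ((x * r) * ((y * x) * (r * y))) :=
    hM.isNilpotent_mul_left (hM.isNilpotent_mul_right h.mul_comm _) _
  refine IsNilpotent.of_pow (m := 2) ?_
  simpa only [sq, mul_assoc] using hsq

theorem isNilpotent_swap_mul_mul {a b c : M} (h : IsNilpotent (a * b * c)) :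
    IsNilpotent (b * a * c) := by
  have hacbac : IsNilpotent (a * c * b * a * c) := by
    have hacbc := hM.isNilpotent_mul_mul (x := a) (y := b * c) (by rwa [← mul_assoc]) c
    exact hM.isNilpotent_mul_mul (x := a * c * b) (by rwa [← mul_assoc] at hacbc) a
  refine IsNilpotent.of_pow (m := 2) ?_
  simpa only [sq, mul_assoc] using hM.isNilpotent_mul_left hacbac b

end IsSemicommutative

theorem stmt_9 (R : Type*) [Ring R]
    (hsc : ∀ a b : R, a * b = 0 → ∀ r : R, a * r * b = 0) :
    NJSymmetric R := fun _ _ _ habc =>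
  Ideal.mem_jacobson_bot_of_forall_isNilpotent_mul
    (IsSemicommutative.isNilpotent_mul_left hsc
      (IsSemicommutative.isNilpotent_swap_mul_mul hsc habc))
end

section
/- If the quotient ring R/J(R) is NJ-symmetric, then R is NJ-symmetric. -/
theorem Ideal.comap_jacobson_bot_of_surjective {R S : Type*} [Ring R] [Ring S] {f : R →+* S}
    (hf : Function.Surjective f) (hker : RingHom.ker f ≤ (⊥ : Ideal R).jacobson) :
    (⊥ : Ideal S).jacobson.comap f = (⊥ : Ideal R).jacobson := by
  rw [Ideal.comap_jacobson_of_surjective hf, ← RingHom.ker_eq_comap_bot]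
  refine le_antisymm ?_ (Ideal.jacobson_mono bot_le)
  calc (RingHom.ker f).jacobson ≤ (⊥ : Ideal R).jacobson.jacobson := Ideal.jacobson_mono hker
    _ = (⊥ : Ideal R).jacobson := Ideal.jacobson_idem

theorem NJSymmetric.of_surjective {R S : Type*} [Ring R] [Ring S] {f : R →+* S}
    (hf : Function.Surjective f) (hker : RingHom.ker f ≤ (⊥ : Ideal R).jacobson)
    (hS : NJSymmetric S) : NJSymmetric R := by
  intro a b c h
  have hfabc : IsNilpotent (f a * f b * f c) := by simpa only [map_mul] using h.map f
  have hmem : b * a * c ∈ (⊥ : Ideal S).jacobson.comap f := by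
    simpa only [Ideal.mem_comap, map_mul] using hS _ _ _ hfabc
  rwa [Ideal.comap_jacobson_bot_of_surjective hf hker] at hmem

theorem stmt_10 (R S : Type*) [Ring R] [Ring S] (f : R →+* S)
    (hf : Function.Surjective f) (hker : RingHom.ker f = (⊥ : Ideal R).jacobson)
    (hS : NJSymmetric S) :
    NJSymmetric R :=
  NJSymmetric.of_surjective hf hker.le hS
end

section
/- If R is an NJ-symmetric left SF ring, then R/J(R) is reduced, i.e., has no nonzero nilpotent elements. -/
/-- A ring `R` is left SF if every simple left `R`-module is flat.  Every simple
left module is of the form `R/H` for a maximal left ideal `H`, and `R/H` is flat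
iff for every `a ∈ H` there is `b ∈ H` with `a = a * b` (the standard
element-wise characterization of flatness of cyclic modules, which is the cited
Lemma 3.14); Mathlib has no flatness over noncommutative rings, so we use this
characterization as the definition. -/
def LeftSF (R : Type*) [Ring R] : Prop :=
  ∀ H : Ideal R, H.IsMaximal → ∀ a ∈ H, ∃ b ∈ H, a = a * b

section

variable {R : Type*} [Ring R]

lemma NJSymmetric.exists_one_sub_mul_mem_jacobson (hR : NJSymmetric R) (hSF : LeftSF R)
    {M : Ideal R} (hM : M.IsMaximal) {a : R} (ha : a ∈ M) :
    ∃ m ∈ M, (1 - m) * a ∈ (⊥ : Ideal R).jacobson := by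
  obtain ⟨m, hm, ham⟩ := hSF M hM a ha
  have hzero : a * (1 - m) * 1 = 0 := by rw [mul_one, mul_sub, mul_one, ← ham, sub_self]
  refine ⟨m, hm, ?_⟩
  simpa using hR a (1 - m) 1 (hzero ▸ IsNilpotent.zero)

lemma NJSymmetric.mem_jacobson_of_mul_self_mem (hR : NJSymmetric R) (hSF : LeftSF R)
    {a : R} (ha : a * a ∈ (⊥ : Ideal R).jacobson) : a ∈ (⊥ : Ideal R).jacobson := by
  let L : Ideal R := Submodule.comap (LinearMap.toSpanSingleton R R a) (⊥ : Ideal R).jacobson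
  have mem_L {r : R} : r ∈ L ↔ r * a ∈ (⊥ : Ideal R).jacobson := Iff.rfl
  by_contra hna
  have hL : L ≠ ⊤ := fun h ↦ hna (by simpa using mem_L.1 (h ▸ Submodule.mem_top : (1 : R) ∈ L))
  obtain ⟨M, hM, hLM⟩ := Ideal.exists_le_maximal L hL
  obtain ⟨m, hm, hma⟩ := hR.exists_one_sub_mul_mem_jacobson hSF hM (hLM (mem_L.2 ha))
  have hone : (1 : R) ∈ M := by simpa using M.add_mem (hLM (mem_L.2 hma)) hm
  exact hM.ne_top ((Ideal.eq_top_iff_one M).2 hone)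

end

theorem stmt_11 (R : Type*) [Ring R] (hR : NJSymmetric R) (hSF : LeftSF R)
    (S : Type*) [Ring S] (f : R →+* S) (hf : Function.Surjective f)
    (hker : RingHom.ker f = (⊥ : Ideal R).jacobson) :
    IsReduced S := by
  rw [isReduced_iff_pow_one_lt 2 one_lt_two]
  intro s hs
  obtain ⟨a, rfl⟩ := hf s
  have ha : a * a ∈ RingHom.ker f := by rwa [RingHom.mem_ker, map_mul, ← pow_two]
  rw [hker] at ha
  simpa [← hker] using hR.mem_jacobson_of_mul_self_mem hSF ha
end

section
/- A ring R is NJ-symmetric if and only if for every idempotent e of R, the corner ring eRe is NJ-symmetric. -/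
/-- The NJ-symmetric condition for the corner ring `eRe`, expressed inside `R`
using the identification `J(eRe) = eJ(R)e`. -/
def CornerNJSymmetric {R : Type*} [Ring R] (e : R) : Prop :=
  ∀ a b c : R, IsNilpotent ((e * a * e) * (e * b * e) * (e * c * e)) →
    ∃ j ∈ (⊥ : Ideal R).jacobson, (e * b * e) * (e * a * e) * (e * c * e) = e * j * e

section

variable {R : Type*} [Ring R]

theorem NJSymmetric.cornerNJSymmetric (h : NJSymmetric R) {e : R} (he : IsIdempotentElem e) :
    CornerNJSymmetric e := by
  intro a b c hn
  refine ⟨(e * b * e) * (e * a * e) * (e * c * e), h _ _ _ hn, ?_⟩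
  simp only [mul_assoc, he.mul_self_mul, he.eq]

theorem cornerNJSymmetric_one_iff : CornerNJSymmetric (1 : R) ↔ NJSymmetric R := by
  simp only [CornerNJSymmetric, NJSymmetric, one_mul, mul_one, exists_eq_right']

end

theorem stmt_12 (R : Type*) [Ring R] :
    NJSymmetric R ↔ ∀ e : R, IsIdempotentElem e → CornerNJSymmetric e :=
  ⟨fun h _ he => h.cornerNJSymmetric he,
    fun h => cornerNJSymmetric_one_iff.mp (h 1 .one)⟩
end

section
/- A trivial Morita context ring R = [[R₁, M], [P, R₂]] (with MP = 0 and PM = 0) is NJ-symmetric if and only if both R₁ and R₂ are NJ-symmetric. -/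
/-- The ring of a trivial Morita context `[[R₁, M], [P, R₂]]`, where `M` is an
`(R₁, R₂)`-bimodule, `P` is an `(R₂, R₁)`-bimodule and both context products
`M × P → R₁` and `P × M → R₂` are zero. -/
@[ext]
structure TrivialMoritaRing (R₁ R₂ M P : Type*) where
  a : R₁
  m : M
  p : P
  b : R₂

namespace TrivialMoritaRing

set_option linter.unusedSectionVars false

variable {R₁ R₂ M P : Type*} [Ring R₁] [Ring R₂]
  [AddCommGroup M] [Module R₁ M] [Module R₂ᵐᵒᵖ M] [SMulCommClass R₁ R₂ᵐᵒᵖ M]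
  [AddCommGroup P] [Module R₂ P] [Module R₁ᵐᵒᵖ P] [SMulCommClass R₂ R₁ᵐᵒᵖ P]

instance : Add (TrivialMoritaRing R₁ R₂ M P) :=
  ⟨fun x y => ⟨x.a + y.a, x.m + y.m, x.p + y.p, x.b + y.b⟩⟩
instance : Zero (TrivialMoritaRing R₁ R₂ M P) := ⟨⟨0, 0, 0, 0⟩⟩
instance : Neg (TrivialMoritaRing R₁ R₂ M P) := ⟨fun x => ⟨-x.a, -x.m, -x.p, -x.b⟩⟩
instance : One (TrivialMoritaRing R₁ R₂ M P) := ⟨⟨1, 0, 0, 1⟩⟩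
/-- Multiplication: the usual matrix multiplication with trivial context
products `MP = 0` and `PM = 0`. -/
instance : Mul (TrivialMoritaRing R₁ R₂ M P) :=
  ⟨fun x y => ⟨x.a * y.a, x.a • y.m + MulOpposite.op y.b • x.m,
    x.b • y.p + MulOpposite.op y.a • x.p, x.b * y.b⟩⟩

@[simp] lemma add_a (x y : TrivialMoritaRing R₁ R₂ M P) : (x + y).a = x.a + y.a := rfl
@[simp] lemma add_m (x y : TrivialMoritaRing R₁ R₂ M P) : (x + y).m = x.m + y.m := rfl
@[simp] lemma add_p (x y : TrivialMoritaRing R₁ R₂ M P) : (x + y).p = x.p + y.p := rfl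
@[simp] lemma add_b (x y : TrivialMoritaRing R₁ R₂ M P) : (x + y).b = x.b + y.b := rfl
@[simp] lemma zero_a : (0 : TrivialMoritaRing R₁ R₂ M P).a = 0 := rfl
@[simp] lemma zero_m : (0 : TrivialMoritaRing R₁ R₂ M P).m = 0 := rfl
@[simp] lemma zero_p : (0 : TrivialMoritaRing R₁ R₂ M P).p = 0 := rfl
@[simp] lemma zero_b : (0 : TrivialMoritaRing R₁ R₂ M P).b = 0 := rfl
@[simp] lemma neg_a (x : TrivialMoritaRing R₁ R₂ M P) : (-x).a = -x.a := rfl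
@[simp] lemma neg_m (x : TrivialMoritaRing R₁ R₂ M P) : (-x).m = -x.m := rfl
@[simp] lemma neg_p (x : TrivialMoritaRing R₁ R₂ M P) : (-x).p = -x.p := rfl
@[simp] lemma neg_b (x : TrivialMoritaRing R₁ R₂ M P) : (-x).b = -x.b := rfl
@[simp] lemma one_a : (1 : TrivialMoritaRing R₁ R₂ M P).a = 1 := rfl
@[simp] lemma one_m : (1 : TrivialMoritaRing R₁ R₂ M P).m = 0 := rfl
@[simp] lemma one_p : (1 : TrivialMoritaRing R₁ R₂ M P).p = 0 := rfl
@[simp] lemma one_b : (1 : TrivialMoritaRing R₁ R₂ M P).b = 1 := rfl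
@[simp] lemma mul_a (x y : TrivialMoritaRing R₁ R₂ M P) : (x * y).a = x.a * y.a := rfl
@[simp] lemma mul_m (x y : TrivialMoritaRing R₁ R₂ M P) :
    (x * y).m = x.a • y.m + MulOpposite.op y.b • x.m := rfl
@[simp] lemma mul_p (x y : TrivialMoritaRing R₁ R₂ M P) :
    (x * y).p = x.b • y.p + MulOpposite.op y.a • x.p := rfl
@[simp] lemma mul_b (x y : TrivialMoritaRing R₁ R₂ M P) : (x * y).b = x.b * y.b := rfl

instance : Ring (TrivialMoritaRing R₁ R₂ M P) where
  add_assoc x y z := by ext <;> simp [add_assoc]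
  zero_add x := by ext <;> simp
  add_zero x := by ext <;> simp
  add_comm x y := by ext <;> simp [add_comm]
  neg_add_cancel x := by ext <;> simp
  nsmul := nsmulRec
  zsmul := zsmulRec
  mul_assoc x y z := by
    ext
    · simp [mul_assoc]
    · simp only [mul_m, mul_a, mul_b, smul_add, mul_smul, MulOpposite.op_mul, add_assoc]
      rw [smul_comm x.a (MulOpposite.op z.b) y.m]
    · simp only [mul_p, mul_a, mul_b, smul_add, mul_smul, MulOpposite.op_mul, add_assoc]
      rw [smul_comm x.b (MulOpposite.op z.a) y.p]
    · simp [mul_assoc]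
  one_mul x := by ext <;> simp
  mul_one x := by ext <;> simp
  left_distrib x y z := by
    ext
    · simp [mul_add]
    · simp only [mul_m, add_m, add_a, add_b, MulOpposite.op_add, add_smul, smul_add]
      abel
    · simp only [mul_p, add_p, add_a, add_b, MulOpposite.op_add, add_smul, smul_add]
      abel
    · simp [mul_add]
  right_distrib x y z := by
    ext
    · simp [add_mul]
    · simp only [mul_m, add_m, add_a, add_b, MulOpposite.op_add, add_smul, smul_add]
      abel
    · simp only [mul_p, add_p, add_a, add_b, MulOpposite.op_add, add_smul, smul_add]
      abel
    · simp [add_mul]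
  zero_mul x := by ext <;> simp
  mul_zero x := by ext <;> simp

end TrivialMoritaRing

/-!
Since the off-diagonal part of `[[R₁, M], [P, R₂]]` squares to zero, an element is left invertible
exactly when its two diagonal entries are, so the Jacobson radical is `[[J(R₁), M], [P, J(R₂)]]`.
The diagonal projections are ring homomorphisms: they carry nilpotency of `xyz` to the corners,
where NJ-symmetry of `R₁` and `R₂` puts the diagonal of `yxz` into the radicals. Conversely, each
`Rᵢ` is a retract of the context ring along a corner embedding that is multiplicative but not
unital, which is enough to transport nilpotency of `abc` up and membership of `bac` in the radical
back down.
-/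

section NJSymmetric

variable {R S : Type*} [Ring R] [Ring S]

theorem IsNilpotent.map_nonUnitalRingHom {r : R} (hr : IsNilpotent r) (f : R →ₙ+* S) :
    IsNilpotent (f r) := by
  obtain ⟨n, hn⟩ := hr
  have map_pow_succ : ∀ k : ℕ, f r ^ (k + 1) = f (r ^ (k + 1)) := by
    intro k
    induction k with
    | zero => simp
    | succ k ih => rw [_root_.pow_succ, ih, ← map_mul, ← _root_.pow_succ]
  exact ⟨n + 1, by rw [map_pow_succ, _root_.pow_succ, hn, zero_mul, map_zero]⟩

theorem Ideal.mem_jacobson_bot_iff_exists_mul_eq_one {x : R} :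
    x ∈ (⊥ : Ideal R).jacobson ↔ ∀ y, ∃ z, z * (y * x + 1) = 1 := by
  simp only [Ideal.mem_jacobson_iff, Ideal.mem_bot, sub_eq_zero, mul_add, mul_one, mul_assoc]

theorem Ideal.map_mem_jacobson_bot {f : R →+* S} (hf : Function.Surjective f) {x : R}
    (hx : x ∈ (⊥ : Ideal R).jacobson) : f x ∈ (⊥ : Ideal S).jacobson := by
  rw [Ideal.mem_jacobson_bot_iff_exists_mul_eq_one] at hx ⊢
  intro y
  obtain ⟨y, rfl⟩ := hf y
  obtain ⟨z, hz⟩ := hx y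
  exact ⟨f z, by rw [← map_mul, ← map_one f, ← map_add, ← map_mul, hz]⟩

theorem NJSymmetric.of_retract (f : S →ₙ+* R) (g : R →+* S) (hgf : ∀ s, g (f s) = s)
    (hR : NJSymmetric R) : NJSymmetric S := by
  intro a b c habc
  have hnil : IsNilpotent (f a * f b * f c) := by
    simpa only [map_mul] using habc.map_nonUnitalRingHom f
  have hmem := Ideal.map_mem_jacobson_bot (fun s ↦ ⟨f s, hgf s⟩) (hR _ _ _ hnil)
  rwa [map_mul, map_mul, hgf, hgf, hgf] at hmem

end NJSymmetric

namespace TrivialMoritaRing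

variable {R₁ R₂ M P : Type*} [Ring R₁] [Ring R₂]
  [AddCommGroup M] [Module R₁ M] [Module R₂ᵐᵒᵖ M] [SMulCommClass R₁ R₂ᵐᵒᵖ M]
  [AddCommGroup P] [Module R₂ P] [Module R₁ᵐᵒᵖ P] [SMulCommClass R₂ R₁ᵐᵒᵖ P]

def fstHom : TrivialMoritaRing R₁ R₂ M P →+* R₁ where
  toFun := a
  map_one' := rfl
  map_mul' _ _ := rfl
  map_zero' := rfl
  map_add' _ _ := rfl

def sndHom : TrivialMoritaRing R₁ R₂ M P →+* R₂ where
  toFun := b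
  map_one' := rfl
  map_mul' _ _ := rfl
  map_zero' := rfl
  map_add' _ _ := rfl

def inlHom : R₁ →ₙ+* TrivialMoritaRing R₁ R₂ M P where
  toFun r := ⟨r, 0, 0, 0⟩
  map_mul' _ _ := by ext <;> simp
  map_zero' := rfl
  map_add' _ _ := by ext <;> simp

def inrHom : R₂ →ₙ+* TrivialMoritaRing R₁ R₂ M P where
  toFun r := ⟨0, 0, 0, r⟩
  map_mul' _ _ := by ext <;> simp
  map_zero' := rfl
  map_add' _ _ := by ext <;> simp

lemma exists_mul_eq_one_iff (u : TrivialMoritaRing R₁ R₂ M P) :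
    (∃ z, z * u = 1) ↔ (∃ z, z * u.a = 1) ∧ (∃ z, z * u.b = 1) := by
  constructor
  · rintro ⟨z, hz⟩
    exact ⟨⟨z.a, congrArg a hz⟩, ⟨z.b, congrArg b hz⟩⟩
  · rintro ⟨⟨z₁, h₁⟩, ⟨z₂, h₂⟩⟩
    -- the corrections `-z₁ m z₂`, `-z₂ p z₁` cancel the off-diagonal entries of the product,
    -- and leave its diagonal alone because `MP = PM = 0`
    refine ⟨⟨z₁, -(z₁ • MulOpposite.op z₂ • u.m), -(z₂ • MulOpposite.op z₁ • u.p), z₂⟩, ?_⟩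
    ext
    · exact h₁
    · simp only [mul_m, one_m, smul_neg]
      rw [← smul_comm z₁ (MulOpposite.op u.b), smul_smul, ← MulOpposite.op_mul, h₂,
        MulOpposite.op_one, one_smul, add_neg_cancel]
    · simp only [mul_p, one_p, smul_neg]
      rw [← smul_comm z₂ (MulOpposite.op u.a), smul_smul, ← MulOpposite.op_mul, h₁,
        MulOpposite.op_one, one_smul, add_neg_cancel]
    · exact h₂

theorem mem_jacobson_bot_iff {x : TrivialMoritaRing R₁ R₂ M P} :
    x ∈ (⊥ : Ideal (TrivialMoritaRing R₁ R₂ M P)).jacobson ↔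
      x.a ∈ (⊥ : Ideal R₁).jacobson ∧ x.b ∈ (⊥ : Ideal R₂).jacobson := by
  refine ⟨fun hx ↦ ⟨Ideal.map_mem_jacobson_bot (f := fstHom) (fun r ↦ ⟨inlHom r, rfl⟩) hx,
    Ideal.map_mem_jacobson_bot (f := sndHom) (fun r ↦ ⟨inrHom r, rfl⟩) hx⟩, ?_⟩
  simp only [Ideal.mem_jacobson_bot_iff_exists_mul_eq_one]
  rintro ⟨ha, hb⟩ y
  exact (exists_mul_eq_one_iff _).2 ⟨ha y.a, hb y.b⟩

end TrivialMoritaRing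

theorem stmt_14 (R₁ R₂ M P : Type*) [Ring R₁] [Ring R₂]
    [AddCommGroup M] [Module R₁ M] [Module R₂ᵐᵒᵖ M] [SMulCommClass R₁ R₂ᵐᵒᵖ M]
    [AddCommGroup P] [Module R₂ P] [Module R₁ᵐᵒᵖ P] [SMulCommClass R₂ R₁ᵐᵒᵖ P] :
    NJSymmetric (TrivialMoritaRing R₁ R₂ M P) ↔ NJSymmetric R₁ ∧ NJSymmetric R₂ := by
  refine ⟨fun h ↦ ⟨h.of_retract TrivialMoritaRing.inlHom TrivialMoritaRing.fstHom fun _ ↦ rfl,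
    h.of_retract TrivialMoritaRing.inrHom TrivialMoritaRing.sndHom fun _ ↦ rfl⟩, ?_⟩
  rintro ⟨h₁, h₂⟩ x y z hxyz
  exact TrivialMoritaRing.mem_jacobson_bot_iff.2
    ⟨h₁ _ _ _ (hxyz.map TrivialMoritaRing.fstHom), h₂ _ _ _ (hxyz.map TrivialMoritaRing.sndHom)⟩
end

section
/- For rings R₁, R₂ and an (R₁,R₂)-bimodule M, the formal triangular matrix ring [[R₁, M], [0, R₂]] is NJ-symmetric if and only if R₁ and R₂ are NJ-symmetric. -/
/-- The formal triangular matrix ring `[[R₁, M], [0, R₂]]` associated to rings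
`R₁`, `R₂` and an `(R₁, R₂)`-bimodule `M`. -/
@[ext]
structure TriangularMatrixRing (R₁ R₂ M : Type*) where
  a : R₁
  m : M
  b : R₂

namespace TriangularMatrixRing

set_option linter.unusedSectionVars false

variable {R₁ R₂ M : Type*} [Ring R₁] [Ring R₂] [AddCommGroup M]
  [Module R₁ M] [Module R₂ᵐᵒᵖ M] [SMulCommClass R₁ R₂ᵐᵒᵖ M]

instance : Add (TriangularMatrixRing R₁ R₂ M) :=
  ⟨fun x y => ⟨x.a + y.a, x.m + y.m, x.b + y.b⟩⟩
instance : Zero (TriangularMatrixRing R₁ R₂ M) := ⟨⟨0, 0, 0⟩⟩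
instance : Neg (TriangularMatrixRing R₁ R₂ M) := ⟨fun x => ⟨-x.a, -x.m, -x.b⟩⟩
instance : One (TriangularMatrixRing R₁ R₂ M) := ⟨⟨1, 0, 1⟩⟩
instance : Mul (TriangularMatrixRing R₁ R₂ M) :=
  ⟨fun x y => ⟨x.a * y.a, x.a • y.m + MulOpposite.op y.b • x.m, x.b * y.b⟩⟩

@[simp] lemma add_a (x y : TriangularMatrixRing R₁ R₂ M) : (x + y).a = x.a + y.a := rfl
@[simp] lemma add_m (x y : TriangularMatrixRing R₁ R₂ M) : (x + y).m = x.m + y.m := rfl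
@[simp] lemma add_b (x y : TriangularMatrixRing R₁ R₂ M) : (x + y).b = x.b + y.b := rfl
@[simp] lemma zero_a : (0 : TriangularMatrixRing R₁ R₂ M).a = 0 := rfl
@[simp] lemma zero_m : (0 : TriangularMatrixRing R₁ R₂ M).m = 0 := rfl
@[simp] lemma zero_b : (0 : TriangularMatrixRing R₁ R₂ M).b = 0 := rfl
@[simp] lemma neg_a (x : TriangularMatrixRing R₁ R₂ M) : (-x).a = -x.a := rfl
@[simp] lemma neg_m (x : TriangularMatrixRing R₁ R₂ M) : (-x).m = -x.m := rfl
@[simp] lemma neg_b (x : TriangularMatrixRing R₁ R₂ M) : (-x).b = -x.b := rfl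
@[simp] lemma one_a : (1 : TriangularMatrixRing R₁ R₂ M).a = 1 := rfl
@[simp] lemma one_m : (1 : TriangularMatrixRing R₁ R₂ M).m = 0 := rfl
@[simp] lemma one_b : (1 : TriangularMatrixRing R₁ R₂ M).b = 1 := rfl
@[simp] lemma mul_a (x y : TriangularMatrixRing R₁ R₂ M) : (x * y).a = x.a * y.a := rfl
@[simp] lemma mul_m (x y : TriangularMatrixRing R₁ R₂ M) :
    (x * y).m = x.a • y.m + MulOpposite.op y.b • x.m := rfl
@[simp] lemma mul_b (x y : TriangularMatrixRing R₁ R₂ M) : (x * y).b = x.b * y.b := rfl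

instance : Ring (TriangularMatrixRing R₁ R₂ M) where
  add_assoc x y z := by ext <;> simp [add_assoc]
  zero_add x := by ext <;> simp
  add_zero x := by ext <;> simp
  add_comm x y := by ext <;> simp [add_comm]
  neg_add_cancel x := by ext <;> simp
  nsmul := nsmulRec
  zsmul := zsmulRec
  mul_assoc x y z := by
    ext
    · simp [mul_assoc]
    · simp only [mul_m, mul_a, mul_b, smul_add, mul_smul, MulOpposite.op_mul, add_assoc]
      rw [smul_comm x.a (MulOpposite.op z.b) y.m]
    · simp [mul_assoc]
  one_mul x := by ext <;> simp
  mul_one x := by ext <;> simp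
  left_distrib x y z := by
    ext
    · simp [mul_add]
    · simp only [mul_m, add_m, add_a, add_b, MulOpposite.op_add, add_smul, smul_add]
      abel
    · simp [mul_add]
  right_distrib x y z := by
    ext
    · simp [add_mul]
    · simp only [mul_m, add_m, add_a, add_b, MulOpposite.op_add, add_smul, smul_add]
      abel
    · simp [add_mul]
  zero_mul x := by ext <;> simp
  mul_zero x := by ext <;> simp

end TriangularMatrixRing

/-!
Units, nilpotent elements and the Jacobson radical of `[[R₁, M], [0, R₂]]` are all detected on
the diagonal, the radical through the criterion that `y x + 1` is a unit for every `y`. The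
diagonal projections are ring homomorphisms and the corners `⟨a, 0, 0⟩`, `⟨0, 0, b⟩` multiply
componentwise, so the NJ condition on the triangular ring splits into those on `R₁` and `R₂`.
-/

theorem Ideal.mem_jacobson_bot_iff_forall_isUnit {R : Type*} [Ring R] {x : R} :
    x ∈ (⊥ : Ideal R).jacobson ↔ ∀ y, IsUnit (y * x + 1) := by
  have left_inv : x ∈ (⊥ : Ideal R).jacobson ↔ ∀ y, ∃ z, z * (y * x + 1) = 1 := by
    simp only [Ideal.mem_jacobson_iff, Ideal.mem_bot, sub_eq_zero, mul_add, mul_one, mul_assoc]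
  rw [left_inv]
  refine ⟨fun h y => ?_, fun h y => ?_⟩
  · obtain ⟨z, hz⟩ := h y
    -- `z = 1 - z y x` is again of the form `y' x + 1`, so it has a left inverse `w`,
    -- which must then equal `y x + 1`.
    have hz' : -(z * y) * x + 1 = z := by
      rw [← hz, neg_mul, mul_assoc, mul_add, mul_one]
      abel
    obtain ⟨w, hw⟩ := h (-(z * y))
    rw [hz'] at hw
    obtain rfl : w = y * x + 1 := left_inv_eq_right_inv hw hz
    exact isUnit_iff_exists.mpr ⟨z, hw, hz⟩
  · obtain ⟨u, hu⟩ := h y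
    exact ⟨↑u⁻¹, by rw [← hu, Units.inv_mul]⟩

namespace TriangularMatrixRing

variable {R₁ R₂ M : Type*} [Ring R₁] [Ring R₂] [AddCommGroup M]
  [Module R₁ M] [Module R₂ᵐᵒᵖ M] [SMulCommClass R₁ R₂ᵐᵒᵖ M]

def aRingHom : TriangularMatrixRing R₁ R₂ M →+* R₁ where
  toFun := a
  map_one' := rfl
  map_mul' _ _ := rfl
  map_zero' := rfl
  map_add' _ _ := rfl

def bRingHom : TriangularMatrixRing R₁ R₂ M →+* R₂ where
  toFun := b
  map_one' := rfl
  map_mul' _ _ := rfl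
  map_zero' := rfl
  map_add' _ _ := rfl

@[simp] lemma pow_a (x : TriangularMatrixRing R₁ R₂ M) (n : ℕ) : (x ^ n).a = x.a ^ n :=
  map_pow aRingHom x n

@[simp] lemma pow_b (x : TriangularMatrixRing R₁ R₂ M) (n : ℕ) : (x ^ n).b = x.b ^ n :=
  map_pow bRingHom x n

theorem isUnit_iff {x : TriangularMatrixRing R₁ R₂ M} : IsUnit x ↔ IsUnit x.a ∧ IsUnit x.b := by
  refine ⟨fun h => ⟨h.map aRingHom, h.map bRingHom⟩, ?_⟩
  obtain ⟨a, m, b⟩ := x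
  rintro ⟨ha : IsUnit a, hb : IsUnit b⟩
  obtain ⟨a', haa', ha'a⟩ := isUnit_iff_exists.mp ha
  obtain ⟨b', hbb', hb'b⟩ := isUnit_iff_exists.mp hb
  refine isUnit_iff_exists.mpr ⟨⟨a', -(a' • MulOpposite.op b' • m), b'⟩, ?_, ?_⟩
  · ext
    · exact haa'
    · simp only [mul_m, one_m, smul_neg, smul_smul, haa', one_smul, neg_add_cancel]
    · exact hbb'
  · ext
    · exact ha'a
    · simp only [mul_m, one_m, smul_neg]
      rw [← smul_comm a' (MulOpposite.op b), smul_smul (MulOpposite.op b), ← MulOpposite.op_mul,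
        hb'b, MulOpposite.op_one, one_smul, add_neg_cancel]
    · exact hb'b

theorem isNilpotent_iff {x : TriangularMatrixRing R₁ R₂ M} :
    IsNilpotent x ↔ IsNilpotent x.a ∧ IsNilpotent x.b := by
  refine ⟨fun h => ⟨h.map aRingHom, h.map bRingHom⟩, ?_⟩
  rintro ⟨⟨n, hn⟩, ⟨k, hk⟩⟩
  -- `x ^ (n + k)` has zero diagonal, and such elements square to zero.
  have ha : (x ^ (n + k)).a = 0 := by rw [pow_a, pow_add, hn, zero_mul]
  have hb : (x ^ (n + k)).b = 0 := by rw [pow_b, pow_add, hk, mul_zero]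
  refine ⟨(n + k) * 2, ?_⟩
  rw [pow_mul, sq]
  ext <;> simp [ha, hb]

theorem mem_jacobson_bot_iff {x : TriangularMatrixRing R₁ R₂ M} :
    x ∈ (⊥ : Ideal (TriangularMatrixRing R₁ R₂ M)).jacobson ↔
      x.a ∈ (⊥ : Ideal R₁).jacobson ∧ x.b ∈ (⊥ : Ideal R₂).jacobson := by
  simp only [Ideal.mem_jacobson_bot_iff_forall_isUnit]
  refine ⟨fun h => ⟨fun y => (isUnit_iff.mp (h ⟨y, 0, 0⟩)).1,
    fun y => (isUnit_iff.mp (h ⟨0, 0, y⟩)).2⟩, fun ⟨ha, hb⟩ w => ?_⟩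
  exact isUnit_iff.mpr ⟨ha w.a, hb w.b⟩

theorem njSymmetric_left (h : NJSymmetric (TriangularMatrixRing R₁ R₂ M)) : NJSymmetric R₁ :=
  fun a b c habc => (mem_jacobson_bot_iff.mp <|
    h ⟨a, 0, 0⟩ ⟨b, 0, 0⟩ ⟨c, 0, 0⟩ (isNilpotent_iff.mpr ⟨habc, by simp⟩)).1

theorem njSymmetric_right (h : NJSymmetric (TriangularMatrixRing R₁ R₂ M)) : NJSymmetric R₂ :=
  fun a b c habc => (mem_jacobson_bot_iff.mp <|
    h ⟨0, 0, a⟩ ⟨0, 0, b⟩ ⟨0, 0, c⟩ (isNilpotent_iff.mpr ⟨by simp, habc⟩)).2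

theorem njSymmetric_of_left_right (h₁ : NJSymmetric R₁) (h₂ : NJSymmetric R₂) :
    NJSymmetric (TriangularMatrixRing R₁ R₂ M) := fun _ _ _ hxyz =>
  have ⟨ha, hb⟩ := isNilpotent_iff.mp hxyz
  mem_jacobson_bot_iff.mpr ⟨h₁ _ _ _ ha, h₂ _ _ _ hb⟩

end TriangularMatrixRing

theorem stmt_15 (R₁ R₂ M : Type*) [Ring R₁] [Ring R₂] [AddCommGroup M]
    [Module R₁ M] [Module R₂ᵐᵒᵖ M] [SMulCommClass R₁ R₂ᵐᵒᵖ M] :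
    NJSymmetric (TriangularMatrixRing R₁ R₂ M) ↔ NJSymmetric R₁ ∧ NJSymmetric R₂ :=
  ⟨fun h => ⟨TriangularMatrixRing.njSymmetric_left h, TriangularMatrixRing.njSymmetric_right h⟩,
    fun ⟨h₁, h₂⟩ => TriangularMatrixRing.njSymmetric_of_left_right h₁ h₂⟩
end

section
/- For any ring R and integer n ≥ 1, R is NJ-symmetric if and only if the upper triangular matrix ring T_n(R) is NJ-symmetric. -/
/-- The ring `T_n(R)` of `n × n` upper triangular matrices over `R`,
as a subring of the full matrix ring. -/
def upperTriangular (R : Type*) [Ring R] (n : ℕ) :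
    Subring (Matrix (Fin n) (Fin n) R) where
  carrier := {A | ∀ i j : Fin n, j < i → A i j = 0}
  mul_mem' := by
    intro A B hA hB i j hji
    rw [Matrix.mul_apply]
    refine Finset.sum_eq_zero fun k _ => ?_
    rcases lt_or_ge k i with h | h
    · rw [hA i k h, zero_mul]
    · rw [hB k j (lt_of_lt_of_le hji h), mul_zero]
  one_mem' := fun i j hji => Matrix.one_apply_ne hji.ne'
  add_mem' := by
    intro A B hA hB i j hji
    simp [Matrix.add_apply, hA i j hji, hB i j hji]
  zero_mem' := fun i j _ => rfl
  neg_mem' := by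
    intro A hA i j hji
    simp [Matrix.neg_apply, hA i j hji]

/-!
`J(T_n(R))` contains every upper triangular matrix whose diagonal lies in `J(R)`: for such `X`
and any `Y`, the matrix `Y X + 1` has unit diagonal, and an upper triangular matrix `U` with
unit diagonal `D` is a unit, being `D (1 + D⁻¹ (U - D))` with `D⁻¹ (U - D)` strictly upper
triangular, hence nilpotent. Since the diagonal entries `T_n(R) → R` are ring homomorphisms,
NJ-symmetry of `R` passes to `T_n(R)`. Conversely `R` is a retract of `T_n(R)` through the scalar
matrices, and a surjective ring homomorphism maps the Jacobson radical into the Jacobson radical.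
-/

namespace Ideal

variable {R : Type*} [Ring R] {x : R}

theorem exists_mul_add_one_eq_one_of_mem_jacobson_bot (hx : x ∈ jacobson (⊥ : Ideal R)) :
    ∃ z, z * (x + 1) = 1 := by
  obtain ⟨z, hz⟩ := mem_jacobson_iff.mp hx 1
  rw [mem_bot, sub_eq_zero, mul_one] at hz
  exact ⟨z, by rw [mul_add, mul_one, hz]⟩

theorem isUnit_add_one_of_mem_jacobson_bot (hx : x ∈ jacobson (⊥ : Ideal R)) :
    IsUnit (x + 1) := by
  obtain ⟨z, hz⟩ := exists_mul_add_one_eq_one_of_mem_jacobson_bot hx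
  -- `z = -(z x) + 1` with `-(z x)` again in the radical, so `z` has a left inverse too.
  have hz_eq : -(z * x) + 1 = z := by
    rw [mul_add, mul_one] at hz
    rw [← hz, neg_add_cancel_left]
  obtain ⟨w, hw⟩ := exists_mul_add_one_eq_one_of_mem_jacobson_bot
    (neg_mem (mul_mem_left _ z hx))
  rw [hz_eq] at hw
  have hright : (x + 1) * z = 1 := left_inv_eq_right_inv hw hz ▸ hw
  exact isUnit_iff_exists_and_exists.mpr ⟨⟨z, hright⟩, ⟨z, hz⟩⟩

theorem mem_jacobson_bot_iff_forall_isUnit_mul_add_one :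
    x ∈ jacobson (⊥ : Ideal R) ↔ ∀ y, IsUnit (y * x + 1) := by
  refine ⟨fun hx y => isUnit_add_one_of_mem_jacobson_bot (mul_mem_left _ y hx), fun h => ?_⟩
  refine mem_jacobson_iff.mpr fun y => ⟨↑(h y).unit⁻¹, ?_⟩
  rw [mem_bot, sub_eq_zero, mul_assoc, ← mul_add_one, IsUnit.val_inv_mul]

end Ideal

namespace NJSymmetric

variable {R S : Type*} [Ring R] [Ring S]

theorem of_forall_map_mem_jacobson {ι : Type*} (φ : ι → S →+* R)
    (hφ : ∀ x, (∀ i, φ i x ∈ (⊥ : Ideal R).jacobson) → x ∈ (⊥ : Ideal S).jacobson)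
    (hR : NJSymmetric R) : NJSymmetric S := by
  intro a b c habc
  refine hφ _ fun i => ?_
  have hnil : IsNilpotent (φ i a * φ i b * φ i c) := by
    simpa only [map_mul] using habc.map (φ i)
  simpa only [map_mul] using hR _ _ _ hnil

theorem of_leftInverse (f : R →+* S) (g : S →+* R) (hgf : Function.LeftInverse g f)
    (hS : NJSymmetric S) : NJSymmetric R := by
  intro a b c habc
  have : RingHomSurjective g := ⟨hgf.surjective⟩
  have hnil : IsNilpotent (f a * f b * f c) := by simpa only [map_mul] using habc.map f
  have hmem := hS _ _ _ hnil
  rw [Ideal.jacobson_bot] at hmem ⊢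
  simpa only [Ideal.mem_comap, ← map_mul, hgf _] using Ring.le_comap_jacobson g hmem

end NJSymmetric

theorem Matrix.pow_eq_zero_of_strictUpper {R : Type*} [Semiring R] {n : ℕ}
    {N : Matrix (Fin n) (Fin n) R} (hN : ∀ i j, j ≤ i → N i j = 0) : N ^ n = 0 := by
  have hpow : ∀ k (i j : Fin n), (j : ℕ) < i + k → (N ^ k) i j = 0 := by
    intro k
    induction k with
    | zero =>
      intro i j hij
      exact one_apply_ne (Fin.ne_of_gt (by simpa using hij))
    | succ k ih =>
      intro i j hij
      rw [pow_succ', mul_apply]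
      refine Finset.sum_eq_zero fun l _ => ?_
      rcases le_or_gt l i with hl | hl
      · rw [hN i l hl, zero_mul]
      · rw [ih l j (by omega), mul_zero]
  ext i j
  exact hpow n i j (by omega)

namespace upperTriangular

variable {R : Type*} [Ring R] {n : ℕ}

def diagonal : (Fin n → R) →+* upperTriangular R n :=
  (Matrix.diagonalRingHom (Fin n) R).codRestrict _ fun _ _ _ h => Matrix.diagonal_apply_ne _ h.ne'

def scalar : R →+* upperTriangular R n :=
  diagonal.comp (Pi.constRingHom (Fin n) R)

def diagEntry (i : Fin n) : upperTriangular R n →+* R where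
  toFun A := A.1 i i
  map_one' := Matrix.one_apply_eq i
  map_mul' A B := by
    change (A.1 * B.1) i i = A.1 i i * B.1 i i
    rw [Matrix.mul_apply]
    refine Finset.sum_eq_single i (fun k _ hk => ?_) (absurd (Finset.mem_univ i))
    rcases hk.lt_or_gt with h | h
    · rw [A.2 i k h, zero_mul]
    · rw [B.2 k i h, mul_zero]
  map_zero' := rfl
  map_add' _ _ := rfl

theorem diagEntry_scalar (i : Fin n) (a : R) : diagEntry i (scalar a) = a :=
  Matrix.diagonal_apply_eq _ i

theorem isUnit_of_forall_isUnit_diagEntry {U : upperTriangular R n}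
    (h : ∀ i, IsUnit (diagEntry i U)) : IsUnit U := by
  obtain ⟨v, hv⟩ := Pi.isUnit_iff.mpr h
  let D := Units.map (diagonal : (Fin n → R) →+* upperTriangular R n).toMonoidHom v
  have hstrict : ∀ i j, j ≤ i → (D⁻¹ * (U - D) : upperTriangular R n).1 i j = 0 := by
    intro i j hji
    change (Matrix.diagonal (↑v⁻¹ : Fin n → R) *
      (U.1 - Matrix.diagonal (↑v : Fin n → R))) i j = 0
    rw [Matrix.diagonal_mul, Matrix.sub_apply]
    rcases hji.lt_or_eq with hlt | rfl
    · rw [U.2 i j hlt, Matrix.diagonal_apply_ne _ hlt.ne', sub_zero, mul_zero]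
    · rw [Matrix.diagonal_apply_eq, hv]
      exact mul_eq_zero_of_right _ (sub_self (U.1 j j))
  have hnil : IsNilpotent (D⁻¹ * (U - D) : upperTriangular R n) :=
    ⟨n, Subtype.ext (by simpa using Matrix.pow_eq_zero_of_strictUpper hstrict)⟩
  have hU : U = D * (1 + D⁻¹ * (U - D)) := by
    rw [mul_add, mul_one, Units.mul_inv_cancel_left, add_sub_cancel]
  exact hU ▸ D.isUnit.mul hnil.isUnit_one_add

theorem mem_jacobson_of_forall_diagEntry_mem {X : upperTriangular R n}
    (h : ∀ i, diagEntry i X ∈ (⊥ : Ideal R).jacobson) :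
    X ∈ (⊥ : Ideal (upperTriangular R n)).jacobson :=
  Ideal.mem_jacobson_bot_iff_forall_isUnit_mul_add_one.mpr fun Y =>
    isUnit_of_forall_isUnit_diagEntry fun i => by
      simpa only [map_add, map_mul, map_one] using
        Ideal.mem_jacobson_bot_iff_forall_isUnit_mul_add_one.mp (h i) (diagEntry i Y)

end upperTriangular

theorem stmt_16 (R : Type*) [Ring R] (n : ℕ) (hn : 1 ≤ n) :
    NJSymmetric R ↔ NJSymmetric (upperTriangular R n) :=
  ⟨NJSymmetric.of_forall_map_mem_jacobson upperTriangular.diagEntry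
      fun _ => upperTriangular.mem_jacobson_of_forall_diagEntry_mem,
    NJSymmetric.of_leftInverse upperTriangular.scalar (upperTriangular.diagEntry ⟨0, hn⟩)
      (upperTriangular.diagEntry_scalar _)⟩
end

section
/- A ring R is NJ-symmetric if and only if the ring R_n of n×n upper triangular matrices over R with constant diagonal (all diagonal entries equal) is NJ-symmetric. -/
/-- The ring `R_n` of `n × n` upper triangular matrices over `R` whose diagonal
entries are all equal, as a subring of the full matrix ring. -/
def constDiagUpperTriangular (R : Type*) [Ring R] (n : ℕ) :
    Subring (Matrix (Fin n) (Fin n) R) where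
  carrier := {A | (∀ i j : Fin n, j < i → A i j = 0) ∧ ∀ i j : Fin n, A i i = A j j}
  mul_mem' := by
    rintro A B ⟨hA1, hA2⟩ ⟨hB1, hB2⟩
    constructor
    · intro i j hji
      rw [Matrix.mul_apply]
      refine Finset.sum_eq_zero fun k _ => ?_
      rcases lt_or_ge k i with h | h
      · rw [hA1 i k h, zero_mul]
      · rw [hB1 k j (lt_of_lt_of_le hji h), mul_zero]
    · have key : ∀ k : Fin n, (A * B) k k = A k k * B k k := by
        intro k
        rw [Matrix.mul_apply]
        refine Finset.sum_eq_single k (fun l _ hl => ?_) fun h => absurd (Finset.mem_univ k) h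
        rcases lt_or_ge l k with hlk | hlk
        · rw [hA1 k l hlk, zero_mul]
        · rw [hB1 l k (lt_of_le_of_ne hlk (Ne.symm hl)), mul_zero]
      intro i j
      rw [key i, key j, hA2 i j, hB2 i j]
  one_mem' :=
    ⟨fun i j hji => Matrix.one_apply_ne hji.ne', fun i j => by simp [Matrix.one_apply]⟩
  add_mem' := by
    rintro A B ⟨hA1, hA2⟩ ⟨hB1, hB2⟩
    exact ⟨fun i j hji => by simp [Matrix.add_apply, hA1 i j hji, hB1 i j hji],
      fun i j => by simp [Matrix.add_apply, hA2 i j, hB2 i j]⟩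
  zero_mem' := ⟨fun i j _ => rfl, fun i j => rfl⟩
  neg_mem' := by
    rintro A ⟨hA1, hA2⟩
    exact ⟨fun i j hji => by simp [Matrix.neg_apply, hA1 i j hji],
      fun i j => by simp [Matrix.neg_apply, hA2 i j]⟩

/-!
An element of a nil ideal `I` lies in the Jacobson radical, because `1 + y x` is a unit for every
`y` when `y x ∈ I` is nilpotent. Hence a surjection `f : R → S` with nil kernel reflects and
preserves membership in the Jacobson radical, and nilpotence lifts along it as well. Both
directions of NJ-symmetry therefore transfer along `f`. The diagonal entry `R_n → R` is such a
surjection: its kernel consists of strictly upper triangular matrices, which are nilpotent.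
-/

namespace Ideal

variable {R S : Type*} [Ring R] [Ring S]

theorem le_jacobson_bot_of_forall_isNilpotent {I : Ideal R} (hI : ∀ x ∈ I, IsNilpotent x) :
    I ≤ (⊥ : Ideal R).jacobson := by
  intro x hx
  rw [mem_jacobson_iff]
  intro y
  obtain ⟨z, hz⟩ := (hI _ (I.mul_mem_left y hx)).isUnit_one_add.exists_left_inv
  refine ⟨z, ?_⟩
  rw [mem_bot, ← hz]
  noncomm_ring

theorem mem_jacobson_bot_iff_of_surjective {f : R →+* S} (hf : Function.Surjective f)
    (hker : ∀ x ∈ RingHom.ker f, IsNilpotent x) {x : R} :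
    x ∈ (⊥ : Ideal R).jacobson ↔ f x ∈ (⊥ : Ideal S).jacobson := by
  have hjac : (RingHom.ker f).jacobson = (⊥ : Ideal R).jacobson :=
    le_antisymm
      ((jacobson_mono (le_jacobson_bot_of_forall_isNilpotent hker)).trans_eq jacobson_idem)
      (jacobson_mono bot_le)
  rw [← hjac, RingHom.ker_eq_comap_bot, ← comap_jacobson_of_surjective hf, mem_comap]

end Ideal

theorem RingHom.isNilpotent_of_isNilpotent_map {R S : Type*} [Ring R] [Ring S] {f : R →+* S}
    (hker : ∀ x ∈ RingHom.ker f, IsNilpotent x) {x : R} (hx : IsNilpotent (f x)) :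
    IsNilpotent x := by
  obtain ⟨m, hm⟩ := hx
  obtain ⟨k, hk⟩ := hker (x ^ m) (by rwa [RingHom.mem_ker, map_pow])
  exact ⟨m * k, by rw [pow_mul, hk]⟩

theorem NJSymmetric.iff_of_surjective {R S : Type*} [Ring R] [Ring S] {f : R →+* S}
    (hf : Function.Surjective f) (hker : ∀ x ∈ RingHom.ker f, IsNilpotent x) :
    NJSymmetric R ↔ NJSymmetric S := by
  constructor
  · intro hR a b c habc
    obtain ⟨a, rfl⟩ := hf a
    obtain ⟨b, rfl⟩ := hf b
    obtain ⟨c, rfl⟩ := hf c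
    rw [← map_mul, ← map_mul] at habc ⊢
    exact (Ideal.mem_jacobson_bot_iff_of_surjective hf hker).mp
      (hR a b c (RingHom.isNilpotent_of_isNilpotent_map hker habc))
  · intro hS a b c habc
    rw [Ideal.mem_jacobson_bot_iff_of_surjective hf hker, map_mul, map_mul]
    exact hS _ _ _ (by simpa only [map_mul] using habc.map f)

namespace Matrix

variable {R : Type*}

theorem IsUpperTriangular.mul_apply_self {m : Type*} [Fintype m] [LinearOrder m]
    [NonUnitalNonAssocSemiring R] {A B : Matrix m m R} (hA : A.IsUpperTriangular)
    (hB : B.IsUpperTriangular) (i : m) : (A * B) i i = A i i * B i i := by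
  rw [mul_apply]
  refine Finset.sum_eq_single i (fun l _ hl => ?_) (absurd (Finset.mem_univ i))
  rcases hl.lt_or_gt with hli | hil
  · rw [hA hli, zero_mul]
  · rw [hB hil, mul_zero]

variable [Semiring R] {n : ℕ}

theorem pow_apply_eq_zero_of_lt_add {M : Matrix (Fin n) (Fin n) R}
    (hM : ∀ i j : Fin n, j ≤ i → M i j = 0) (k : ℕ) {i j : Fin n}
    (hij : (j : ℕ) < i + k) : (M ^ k) i j = 0 := by
  induction k generalizing j with
  | zero => exact one_apply_ne (by rintro rfl; omega)
  | succ k ih =>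
    rw [pow_succ, mul_apply]
    refine Finset.sum_eq_zero fun l _ => ?_
    rcases lt_or_ge (l : ℕ) (i + k) with hl | hl
    · rw [ih hl, zero_mul]
    · rw [hM l j (Fin.le_def.mpr (by omega)), mul_zero]

theorem pow_eq_zero_of_strictlyUpperTriangular {M : Matrix (Fin n) (Fin n) R}
    (hM : ∀ i j : Fin n, j ≤ i → M i j = 0) : M ^ n = 0 := by
  ext i j
  exact pow_apply_eq_zero_of_lt_add hM n (by omega)

end Matrix

namespace constDiagUpperTriangular

variable {R : Type*} [Ring R] {n : ℕ}

theorem isUpperTriangular (A : constDiagUpperTriangular R n) :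
    (A : Matrix (Fin n) (Fin n) R).IsUpperTriangular :=
  fun i j h => A.2.1 i j h

variable [NeZero n]

def diagEntry : constDiagUpperTriangular R n →+* R where
  toFun A := (A : Matrix (Fin n) (Fin n) R) 0 0
  map_one' := Matrix.one_apply_eq 0
  map_zero' := rfl
  map_add' _ _ := rfl
  map_mul' A B := (isUpperTriangular A).mul_apply_self (isUpperTriangular B) 0

theorem diagEntry_surjective :
    Function.Surjective (diagEntry : constDiagUpperTriangular R n → R) :=
  fun r =>
    ⟨⟨Matrix.diagonal fun _ => r, Matrix.blockTriangular_diagonal _, fun _ _ => by simp⟩,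
      Matrix.diagonal_apply_eq _ 0⟩

theorem isNilpotent_of_mem_ker_diagEntry (A : constDiagUpperTriangular R n)
    (hA : A ∈ RingHom.ker diagEntry) : IsNilpotent A := by
  have hstrict : ∀ i j : Fin n, j ≤ i → (A : Matrix (Fin n) (Fin n) R) i j = 0 := by
    intro i j hji
    rcases hji.lt_or_eq with hlt | rfl
    · exact A.2.1 i j hlt
    · exact (A.2.2 j 0).trans hA
  refine ⟨n, Subtype.ext ?_⟩
  rw [SubmonoidClass.coe_pow]
  exact Matrix.pow_eq_zero_of_strictlyUpperTriangular hstrict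

end constDiagUpperTriangular

theorem stmt_18 (R : Type*) [Ring R] (n : ℕ) (hn : 1 ≤ n) :
    NJSymmetric R ↔ NJSymmetric (constDiagUpperTriangular R n) := by
  have : NeZero n := ⟨by omega⟩
  exact (NJSymmetric.iff_of_surjective constDiagUpperTriangular.diagEntry_surjective
    constDiagUpperTriangular.isNilpotent_of_mem_ker_diagEntry).symm
end
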